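/- arXiv:2110.08790 — 3 statements merged into one kernel-verified Lean document; each statement's English description precedes it below -/
import Mathlib

section
/- Every 312-avoiding permutation of [n] is a web permutation, i.e., every cycle of a 312-avoiding permutation is an André cycle. Equivalently: if a permutation σ of [n] has a cycle that is not an André cycle, then σ contains a 312-pattern. -/
/-- Maximum of a list of naturals (0 for the empty list). -/
def listMax (l : List ℕ) : ℕ := l.foldr max 0

/-- André permutations (words of distinct positive integers), defined recursively:
the empty word and one-letter words are André; a longer word is André iff its minimum
letter `m` splits it as `l ++ m :: r` with `l`, `r` André and `max l < max r`. -/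
inductive IsAndre : List ℕ → Prop
  | nil : IsAndre []
  | single (a : ℕ) : IsAndre [a]
  | node (l r : List ℕ) (m : ℕ) : IsAndre l → IsAndre r →
      (∀ x ∈ l ++ r, m < x) → listMax l < listMax r → IsAndre (l ++ m :: r)

/-- A cycle, written as a list starting with its minimum, is an André cycle if the
remaining word is an André permutation. -/
def IsAndreCycleList (c : List ℕ) : Prop :=
  ∃ a t, c = a :: t ∧ (∀ x ∈ t, a < x) ∧ IsAndre t

/-- The cycle of `σ` through `x`, as the list `x, σ x, σ² x, …` of values in `[n]`
(recorded 1-indexed, i.e. shifted by one). -/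
noncomputable def permCycleList {m : ℕ} (σ : Equiv.Perm (Fin m)) (x : Fin m) : List ℕ :=
  (List.range (Function.minimalPeriod ⇑σ x)).map fun k => ((σ ^ k) x : ℕ) + 1

/-- A web permutation: each cycle (written starting at its minimal element) is an
André cycle. -/
def IsWebPerm {m : ℕ} (σ : Equiv.Perm (Fin m)) : Prop :=
  ∀ x : Fin m, (∀ k : ℕ, x ≤ (σ ^ k) x) → IsAndreCycleList (permCycleList σ x)

/-! Let `(a, t)` be a cycle with minimum `a`, let `t = l ++ m :: r` where `m = min t`, and let `q`
be the last letter of the cycle, so that `σ q = a`. If some letter `x > q` had `σ x ≤ q`, then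
every `y < q` would satisfy `σ y ≤ σ x` (otherwise `y, q, x` is a 312), so `σ` would map
`{y ≤ q}` into itself while also hitting `σ x` from outside. Hence `σ` preserves `{y ≤ q}`, which
contains the whole orbit of `a`: `q` is the maximum of the cycle, so `q ∈ r` and `max l < max r`.
Composing with the transposition `(a m)` splits the cycle into `(a, l)` and `(m, r)`; as `a` and
`m` lie below all other letters, the swap preserves relative order on either new cycle, so both
are still 312-avoiding and induction applies. -/

open Set

def Avoids312On {α β : Type*} [LT α] [LT β] (f : α → β) (s : Set α) : Prop :=
  ∀ ⦃x⦄, x ∈ s → ∀ ⦃y⦄, y ∈ s → ∀ ⦃z⦄, z ∈ s → x < y → y < z → ¬ (f y < f z ∧ f z < f x)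

namespace Avoids312On

theorem mono {α β : Type*} [LT α] [LT β] {f : α → β} {s t : Set α} (h : Avoids312On f t)
    (hst : s ⊆ t) : Avoids312On f s :=
  fun _ hx _ hy _ hz => h (hst hx) (hst hy) (hst hz)

theorem image {α β γ δ : Type*} [LinearOrder α] [LinearOrder β] [Preorder γ] [Preorder δ]
    {f : α → β} {g : γ → δ} {e : α → γ} {φ : β → δ} {s : Set α}
    (hf : Avoids312On f s) (he : StrictMonoOn e s) (hφ : StrictMonoOn φ (f '' s))
    (hfg : ∀ x ∈ s, g (e x) = φ (f x)) : Avoids312On g (e '' s) := by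
  rintro _ ⟨x, hx, rfl⟩ _ ⟨y, hy, rfl⟩ _ ⟨z, hz, rfl⟩ hxy hyz hpat
  rw [hfg x hx, hfg y hy, hfg z hz] at hpat
  have hfx := mem_image_of_mem f hx
  have hfy := mem_image_of_mem f hy
  have hfz := mem_image_of_mem f hz
  exact hf hx hy hz ((he.lt_iff_lt hx hy).mp hxy) ((he.lt_iff_lt hy hz).mp hyz)
    ⟨(hφ.lt_iff_lt hfy hfz).mp hpat.1, (hφ.lt_iff_lt hfz hfx).mp hpat.2⟩

end Avoids312On

theorem Equiv.Perm.mem_of_apply_mem_of_mapsTo {α : Type*} (σ : Equiv.Perm α) {s : Set α}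
    (hs : s.Finite) (hσ : MapsTo σ s s) {x : α} (hx : σ x ∈ s) : x ∈ s := by
  have := hs.to_subtype
  simpa using σ.perm_symm_mapsTo_of_mapsTo hσ hx

theorem List.swap_mul_formPerm_cons_append_cons {α : Type*} [DecidableEq α] {a m : α}
    {l r : List α} (h : (a :: l ++ m :: r).Nodup) :
    Equiv.swap a m * (a :: l ++ m :: r).formPerm = (a :: l).formPerm * (m :: r).formPerm := by
  induction l generalizing a with
  | nil => simp [formPerm_cons_cons, Equiv.swap_mul_self_mul]
  | cons b l ih =>
    have hab : a ≠ b := by simp_all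
    have ham : a ≠ m := by simp_all
    have hbm : b ≠ m := by simp_all
    have hconj : Equiv.swap a b * Equiv.swap b m = Equiv.swap a m * Equiv.swap a b := by
      rw [← Equiv.swap_mul_swap_mul_swap ham.symm hbm.symm, Equiv.swap_comm m a, ← mul_assoc,
        ← mul_assoc, Equiv.swap_mul_self, one_mul]
    rw [cons_append, cons_append, formPerm_cons_cons, formPerm_cons_cons, mul_assoc,
      ← cons_append, ← ih h.of_cons, ← mul_assoc, ← mul_assoc, hconj]

section LinearOrder

variable {α : Type*} [LinearOrder α]

namespace Equiv

theorem swap_apply_of_lt_of_lt {a b x : α} (hab : a < b) (hbx : b < x) : swap a b x = x :=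
  swap_apply_of_ne_of_ne (hab.trans hbx).ne' hbx.ne'

theorem swap_apply_le {a b c : α} (hab : a ≤ b) (hc : c ≤ b) : swap a b c ≤ b := by
  rw [swap_apply_def]
  split_ifs
  exacts [le_rfl, hab, hc]

theorem strictMonoOn_swap {a b c : α} (hab : a < b) (hc : c ≤ b) :
    StrictMonoOn (swap a b) (insert c (Ioi b)) := by
  rintro x hx y (rfl | hy) hxy
  · rcases hx with rfl | hx
    · exact absurd hxy (lt_irrefl _)
    · exact absurd (hc.trans_lt hx) hxy.not_gt
  rw [swap_apply_of_lt_of_lt hab hy]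
  rcases hx with rfl | hx
  · exact (swap_apply_le hab.le hc).trans_lt hy
  · rwa [swap_apply_of_lt_of_lt hab hx]

end Equiv

namespace Avoids312On

theorem of_eq_swap_apply {σ g : Equiv.Perm α} {a b c : α} {s : Set α} (hab : a < b) (hc : c ≤ b)
    (hs : s ⊆ insert c (Ioi b)) (hg : ∀ x ∈ s, g x = Equiv.swap a b (σ x)) (hgs : MapsTo g s s)
    (h : Avoids312On σ s) : Avoids312On g s := by
  have hσ : MapsTo σ s (insert (Equiv.swap a b c) (Ioi b)) := by
    intro x hx
    rcases hg x hx ▸ hs (hgs hx) with hσx | hσx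
    · left
      rw [← hσx, Equiv.swap_apply_self]
    · right
      rwa [← Equiv.swap_apply_self a b (σ x), Equiv.swap_apply_of_lt_of_lt hab hσx]
  simpa using h.image strictMonoOn_id
    ((Equiv.strictMonoOn_swap hab (Equiv.swap_apply_le hab.le hc)).mono hσ.image_subset) hg

theorem mapsTo_le {σ : Equiv.Perm α} {s : Set α} (hs : s.Finite) (hσ : MapsTo σ s s) {q : α}
    (hq : q ∈ s) (hmin : ∀ x ∈ s, σ q ≤ x) (h : Avoids312On σ s) :
    MapsTo σ {x ∈ s | x ≤ q} {x ∈ s | x ≤ q} := by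
  have hfin : ∀ p : α → Prop, {x ∈ s | p x}.Finite := fun p => hs.subset (sep_subset _ _)
  have above : MapsTo σ {x ∈ s | q < x} {x ∈ s | q < x} := by
    rintro x ⟨hxs, hqx⟩
    refine ⟨hσ hxs, lt_of_not_ge fun hle => ?_⟩
    have below : MapsTo σ {x ∈ s | x ≤ q} {x ∈ s | x ≤ q} := by
      rintro y ⟨hys, hyq⟩
      refine ⟨hσ hys, ?_⟩
      rcases hyq.lt_or_eq with hyq | rfl
      · have hqx' : σ q < σ x := (hmin _ (hσ hxs)).lt_of_ne (σ.injective.ne hqx.ne)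
        exact (not_lt.mp fun hlt => h hys hq hxs hyq hqx ⟨hqx', hlt⟩).trans hle
      · exact hmin _ hq
    exact hqx.not_ge (σ.mem_of_apply_mem_of_mapsTo (hfin _) below ⟨hσ hxs, hle⟩).2
  rintro y ⟨hys, hyq⟩
  exact ⟨hσ hys, not_lt.mp fun hqy =>
    hyq.not_gt (σ.mem_of_apply_mem_of_mapsTo (hfin _) above ⟨hσ hys, hqy⟩).2⟩

end Avoids312On

namespace List

theorem le_getLast_of_avoids312On {a : α} {t : List α} (hnd : (a :: t).Nodup)
    (hmin : ∀ x ∈ t, a ≤ x) (h : Avoids312On (a :: t).formPerm {x | x ∈ a :: t}) :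
    ∀ x ∈ a :: t, x ≤ (a :: t).getLast (cons_ne_nil a t) := by
  set q := (a :: t).getLast (cons_ne_nil a t)
  have hq : (a :: t).formPerm q = a := formPerm_apply_getLast a t
  have hmin' : ∀ x ∈ {x | x ∈ a :: t}, (a :: t).formPerm q ≤ x := by
    simpa [hq, forall_mem_cons] using hmin
  have hmaps := h.mapsTo_le (finite_toSet _) (fun _ => formPerm_apply_mem_of_mem)
    (getLast_mem _) hmin'
  have ha : a ∈ {x ∈ {x | x ∈ a :: t} | x ≤ q} := ⟨mem_cons_self, hq ▸ hmin' _ (getLast_mem _)⟩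
  intro x hx
  obtain ⟨i, hi, rfl⟩ := mem_iff_getElem.mp hx
  have hiter : (a :: t).formPerm^[i] a = (a :: t)[i] := by
    simp only [Equiv.Perm.iterate_eq_pow, formPerm_pow_apply_head _ _ hnd, Nat.mod_eq_of_lt hi]
  exact (hiter ▸ hmaps.iterate i ha).2

theorem avoids312On_formPerm_of_cons_append_cons {a m : α} {l r : List α}
    (hnd : (a :: l ++ m :: r).Nodup) (ham : a < m) (hm : ∀ x ∈ l ++ r, m < x)
    (h : Avoids312On (a :: l ++ m :: r).formPerm {x | x ∈ a :: l ++ m :: r}) :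
    Avoids312On (a :: l).formPerm {x | x ∈ a :: l} ∧
      Avoids312On (m :: r).formPerm {x | x ∈ m :: r} := by
  have hsplit (x : α) : Equiv.swap a m ((a :: l ++ m :: r).formPerm x) =
      (a :: l).formPerm ((m :: r).formPerm x) := by
    rw [← Equiv.Perm.mul_apply, swap_mul_formPerm_cons_append_cons hnd, Equiv.Perm.mul_apply]
  have hdisj : ∀ x ∈ a :: l, x ∉ m :: r := fun x hx hx' =>
    (nodup_append.mp hnd).2.2 x hx x hx' rfl
  constructor
  · refine (h.mono fun x hx => ?_).of_eq_swap_apply ham ham.le (fun x hx => ?_) (fun x hx => ?_)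
      fun _ => formPerm_apply_mem_of_mem
    · exact mem_append_left _ hx
    · rcases mem_cons.mp hx with rfl | hx
      exacts [Set.mem_insert _ _, Or.inr (hm x (mem_append_left _ hx))]
    · rw [hsplit, formPerm_apply_of_notMem (hdisj x hx)]
  · refine (h.mono fun x hx => ?_).of_eq_swap_apply ham le_rfl (fun x hx => ?_) (fun x hx => ?_)
      fun _ => formPerm_apply_mem_of_mem
    · exact mem_append_right _ hx
    · rcases mem_cons.mp hx with rfl | hx
      exacts [Set.mem_insert _ _, Or.inr (hm x (mem_append_right _ hx))]
    · rw [hsplit, formPerm_apply_of_notMem fun hx' => hdisj _ hx' (formPerm_apply_mem_of_mem hx)]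

end List

end LinearOrder

theorem le_listMax {l : List ℕ} {x : ℕ} (hx : x ∈ l) : x ≤ listMax l :=
  List.le_max_of_le hx le_rfl

theorem listMax_lt {l : List ℕ} {M : ℕ} (hM : 0 < M) (h : ∀ x ∈ l, x < M) : listMax l < M := by
  induction l with
  | nil => exact hM
  | cons a l ih =>
    exact max_lt (h a List.mem_cons_self) (ih fun x hx => h x (List.mem_cons_of_mem _ hx))

open List in
theorem listMax_lt_listMax_of_avoids312On {a m : ℕ} {l r : List ℕ}
    (hnd : (a :: l ++ m :: r).Nodup) (hmin : ∀ x ∈ l ++ m :: r, a < x)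
    (hm : ∀ x ∈ l ++ r, m < x) (hlr : l ++ r ≠ [])
    (h : Avoids312On (a :: l ++ m :: r).formPerm {x | x ∈ a :: l ++ m :: r}) :
    listMax l < listMax r := by
  have hq : ∀ x ∈ a :: l ++ m :: r, x ≤ (m :: r).getLast (cons_ne_nil m r) := by
    rw [← getLast_append_of_ne_nil (l := a :: l) (cons_ne_nil _ _) (cons_ne_nil m r)]
    exact le_getLast_of_avoids312On hnd (fun x hx => (hmin x hx).le) h
  have hr : r ≠ [] := by
    rintro rfl
    obtain ⟨x, hx⟩ := exists_mem_of_ne_nil _ (by simpa using hlr)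
    have hxm : x ≤ m := by simpa using hq x (by simp [hx])
    exact (hm x (by simp [hx])).not_ge hxm
  have hqr : (m :: r).getLast (cons_ne_nil m r) ∈ r := by
    rw [getLast_cons hr]
    exact getLast_mem hr
  have hq_pos : 0 < (m :: r).getLast (cons_ne_nil m r) :=
    (Nat.zero_le a).trans_lt (hmin _ (mem_append_right _ (mem_cons_of_mem _ hqr)))
  have hlq : ∀ x ∈ l, x < (m :: r).getLast (cons_ne_nil m r) := fun x hx =>
    (hq x (mem_append_left _ (mem_cons_of_mem _ hx))).lt_of_ne
      ((nodup_append.mp hnd).2.2 x (mem_cons_of_mem _ hx) _ (mem_cons_of_mem _ hqr))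
  exact (listMax_lt hq_pos hlq).trans_le (le_listMax hqr)

open List in
theorem isAndre_of_avoids312On {a : ℕ} {t : List ℕ} (hnd : (a :: t).Nodup)
    (hmin : ∀ x ∈ t, a < x) (h : Avoids312On (a :: t).formPerm {x | x ∈ a :: t}) : IsAndre t := by
  induction hlen : t.length using Nat.strong_induction_on generalizing a t with
  | _ n ih =>
  rcases lt_or_ge t.length 2 with hshort | hlong
  · match t, hshort with
    | [], _ => exact .nil
    | [b], _ => exact .single b
  have hne : t ≠ [] := ne_nil_of_length_pos (by omega)
  obtain ⟨m, hmt, hm⟩ : ∃ m ∈ t, ∀ x ∈ t, m ≤ x :=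
    ⟨t.min hne, min_mem hne, fun x hx => min_le_of_mem hx⟩
  obtain ⟨l, r, rfl⟩ := append_of_mem hmt
  have hm' : ∀ x ∈ l ++ r, m < x := fun x hx =>
    (hm x (by rcases mem_append.mp hx with hx | hx <;> simp [hx])).lt_of_ne
      (ne_of_mem_of_not_mem hx (nodup_middle.mp hnd.of_cons).notMem).symm
  have ham : a < m := hmin m (mem_append_right _ mem_cons_self)
  have hlr : l ++ r ≠ [] := ne_nil_of_length_pos (by simp at hlong ⊢; omega)
  obtain ⟨hl, hr⟩ := avoids312On_formPerm_of_cons_append_cons hnd ham hm' h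
  have hlen_l : l.length < n := by simp [← hlen]
  have hlen_r : r.length < n := by simp [← hlen]; omega
  refine .node l r m ?_ ?_ hm' (listMax_lt_listMax_of_avoids312On hnd hmin hm' hlr h)
  · exact ih _ hlen_l (hnd.sublist (sublist_append_left (a :: l) _))
      (fun x hx => hmin x (mem_append_left _ hx)) hl rfl
  · exact ih _ hlen_r (hnd.sublist (sublist_append_right (a :: l) _))
      (fun x hx => hm' x (mem_append_right _ hx)) hr rfl

section permCycleList

variable {m : ℕ} (σ : Equiv.Perm (Fin m)) (x : Fin m)

theorem permCycleList_eq_cons : ∃ t, permCycleList σ x = ((x : ℕ) + 1) :: t := by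
  have hpos : 0 < Function.minimalPeriod σ x :=
    Function.minimalPeriod_pos_of_mem_periodicPts (σ.injective.mem_periodicPts x)
  obtain ⟨p, hp⟩ := Nat.exists_eq_succ_of_ne_zero hpos.ne'
  rw [permCycleList, hp, List.range_succ_eq_map, List.map_cons, pow_zero, Equiv.Perm.one_apply]
  exact ⟨_, rfl⟩

theorem permCycleList_nodup : (permCycleList σ x).Nodup := by
  refine List.Nodup.map_on (fun i hi j hj hij => ?_) List.nodup_range
  refine Function.iterate_injOn_Iio_minimalPeriod (List.mem_range.mp hi) (List.mem_range.mp hj) ?_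
  simpa [Equiv.Perm.iterate_eq_pow, Fin.val_eq_val] using hij

theorem formPerm_permCycleList_apply {y : Fin m} (hy : (y : ℕ) + 1 ∈ permCycleList σ x) :
    (permCycleList σ x).formPerm ((y : ℕ) + 1) = (σ y : ℕ) + 1 := by
  obtain ⟨k, hk, hky⟩ := List.mem_map.mp hy
  rw [List.mem_range] at hk
  obtain rfl : (σ ^ k) x = y := Fin.ext (Nat.add_right_cancel hky)
  have hlen : (permCycleList σ x).length = Function.minimalPeriod σ x := by simp [permCycleList]
  have hget (i : ℕ) (hi : i < (permCycleList σ x).length) :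
      (permCycleList σ x)[i] = ((σ ^ i) x : ℕ) + 1 := by
    simp [permCycleList]
  rw [← hget k (hlen ▸ hk), List.formPerm_apply_getElem _ (permCycleList_nodup σ x), hget, hlen,
    ← Equiv.Perm.iterate_eq_pow, Function.iterate_mod_minimalPeriod_eq,
    Function.iterate_succ_apply', Equiv.Perm.iterate_eq_pow]

variable {σ} in
theorem Avoids312On.formPerm_permCycleList (h : Avoids312On σ univ) :
    Avoids312On (permCycleList σ x).formPerm {v | v ∈ permCycleList σ x} := by
  set succ : Fin m → ℕ := fun y => (y : ℕ) + 1
  have hsucc : StrictMono succ := fun _ _ hyz => Nat.add_lt_add_right hyz 1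
  have hrange : {v | v ∈ permCycleList σ x} ⊆ range succ := fun v hv => by
    obtain ⟨k, -, rfl⟩ := List.mem_map.mp hv
    exact mem_range_self _
  rw [← image_preimage_eq_of_subset hrange]
  exact (h.mono (subset_univ _)).image (φ := succ) (hsucc.strictMonoOn _) (hsucc.strictMonoOn _)
    fun y hy => formPerm_permCycleList_apply σ x hy

end permCycleList

/-- Every 312-avoiding permutation of `[n]` is a web permutation: if `σ` has no indices
`i < j < k` with `σ j < σ k < σ i`, then every cycle of `σ` is an André cycle. -/
theorem avoid312_isWebPerm (n : ℕ) (σ : Equiv.Perm (Fin n))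
    (h : ¬ ∃ i j k : Fin n, i < j ∧ j < k ∧ σ j < σ k ∧ σ k < σ i) :
    IsWebPerm σ := by
  intro x hx
  have hσ : Avoids312On σ univ := fun i _ j _ k _ hij hjk hpat => h ⟨i, j, k, hij, hjk, hpat⟩
  obtain ⟨t, ht⟩ := permCycleList_eq_cons σ x
  have hnd := permCycleList_nodup σ x
  have havoid := hσ.formPerm_permCycleList x
  rw [ht] at hnd havoid
  have hmin : ∀ v ∈ t, (x : ℕ) + 1 < v := by
    intro v hv
    obtain ⟨k, -, rfl⟩ := List.mem_map.mp (ht ▸ List.mem_cons_of_mem _ hv)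
    exact (Nat.add_le_add_right (hx k) 1).lt_of_ne (ne_of_mem_of_not_mem hv hnd.notMem).symm
  exact ⟨_, t, ht, hmin, isAndre_of_avoids312On hnd hmin havoid⟩
end

section
/- The number of nonnesting matchings on [2n] equals the number of noncrossing matchings on [2n], and both equal the Catalan number C_n. -/
/-- A perfect matching on `[2n]`, encoded as a fixed-point-free involution: the arcs are
the pairs `{x, σ x}`. -/
def IsPerfMatching {m : ℕ} (σ : Equiv.Perm (Fin m)) : Prop :=
  σ * σ = 1 ∧ ∀ x, σ x ≠ x

/-- The matching `σ` has a crossing: arcs `{a,c}` and `{b,d}` with `a < b < c < d`. -/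
def HasCrossing {m : ℕ} (σ : Equiv.Perm (Fin m)) : Prop :=
  ∃ a b : Fin m, a < b ∧ b < σ a ∧ σ a < σ b

/-- The matching `σ` has a nesting: arcs `{a,d}` and `{b,c}` with `a < b < c < d`. -/
def HasNesting {m : ℕ} (σ : Equiv.Perm (Fin m)) : Prop :=
  ∃ a b : Fin m, a < b ∧ b < σ b ∧ σ b < σ a

/-!
Record a perfect matching `σ` by its step word: an up step `U` at every `x < σ x`, where an arc
opens, and a down step `D` at every `x > σ x`. Since `σ` sends the closers of each prefix
injectively to openers of the same prefix, this word is a Dyck word. Conversely every Dyck word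
is the word of exactly one nonnesting matching, which pairs the `k`-th `U` with the `k`-th `D`,
and of exactly one noncrossing matching, which pairs each `U` with the `D` at which the height
path first returns to the level it had before that `U`. Hence both kinds of matchings on `[2n]`
are counted by the Dyck words of semilength `n`, that is, by `catalan n`.
-/

open Finset DyckStep
open Equiv (Perm)

namespace DyckStep

def toInt : DyckStep → ℤ
  | U => 1
  | D => -1

lemma sum_map_toInt (l : List DyckStep) : (l.map toInt).sum = l.count U - l.count D := by
  induction l with
  | nil => simp
  | cons s l ih => cases s <;> simp [ih, toInt] <;> ring

lemma neg_one_le_toInt (s : DyckStep) : -1 ≤ s.toInt := by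
  cases s <;> decide

end DyckStep

namespace PerfMatching

variable {m : ℕ}

section Height

variable (w : Fin m → DyckStep)

def height (i : ℕ) : ℤ := ∑ x with x.val < i, (w x).toInt

lemma height_eq_count_take (i : ℕ) :
    height w i = ((List.ofFn w).take i).count U - ((List.ofFn w).take i).count D := by
  rw [height, ← List.sum_take_ofFn, ← sum_map_toInt, List.map_take, List.map_ofFn]
  rfl

lemma height_sub_height {i j : ℕ} (hij : i ≤ j) :
    height w j - height w i = ∑ x with i ≤ x.val ∧ x.val < j, (w x).toInt := by
  simp only [height, sum_filter, ← sum_sub_distrib]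
  refine sum_congr rfl fun x _ => ?_
  split_ifs <;> first | (exfalso; omega) | simp

lemma height_succ (x : Fin m) : height w (x + 1) = height w x + (w x).toInt := by
  rw [← sub_eq_iff_eq_add', height_sub_height w (Nat.le_succ x)]
  convert sum_singleton (fun x => (w x).toInt) x
  ext y
  simp [Fin.ext_iff]
  omega

lemma sum_toInt_eq_card_sub_card (s : Finset (Fin m)) :
    ∑ x ∈ s, (w x).toInt = #{x ∈ s | w x = U} - #{x ∈ s | w x = D} := by
  simp only [card_filter, Nat.cast_sum, Nat.cast_ite, Nat.cast_one, Nat.cast_zero,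
    ← sum_sub_distrib]
  refine sum_congr rfl fun x _ => ?_
  cases w x <;> rfl

structure IsBallot : Prop where
  height_nonneg (i : ℕ) : 0 ≤ height w i
  height_eq_zero : height w m = 0

lemma isBallot_iff : IsBallot w ↔ (List.ofFn w).count U = (List.ofFn w).count D ∧
    ∀ i, ((List.ofFn w).take i).count D ≤ ((List.ofFn w).take i).count U := by
  have hm : (List.ofFn w).take m = List.ofFn w := List.take_of_length_le (by simp)
  have hcount := height_eq_count_take w
  refine ⟨fun hw => ⟨?_, fun i => ?_⟩, fun hw => ⟨fun i => ?_, ?_⟩⟩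
  · have := hcount m
    rw [hm, hw.height_eq_zero] at this
    omega
  · have := hcount i
    have := hw.height_nonneg i
    omega
  · have := hcount i
    have := hw.2 i
    omega
  · rw [hcount, hm, hw.1, sub_self]

def IsBallot.toDyckWord (hw : IsBallot w) : DyckWord :=
  ⟨List.ofFn w, ((isBallot_iff w).1 hw).1, ((isBallot_iff w).1 hw).2⟩

@[simp]
lemma IsBallot.toList_toDyckWord (hw : IsBallot w) : hw.toDyckWord.toList = List.ofFn w := rfl

end Height

lemma isBallot_of_ofFn_eq (p : DyckWord) {w : Fin m → DyckStep} (h : List.ofFn w = p.toList) :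
    IsBallot w :=
  (isBallot_iff w).2 (h ▸ ⟨p.count_U_eq_count_D, p.count_D_le_count_U⟩)

def ballotEquivDyckWord (n : ℕ) :
    {w : Fin (2 * n) → DyckStep // IsBallot w} ≃ {p : DyckWord // p.semilength = n} where
  toFun w := ⟨w.2.toDyckWord, by
    have := w.2.toDyckWord.two_mul_semilength_eq_length
    simp only [IsBallot.toList_toDyckWord, List.length_ofFn] at this
    omega⟩
  invFun p :=
    have hlen : p.1.toList.length = 2 * n := by rw [← p.1.two_mul_semilength_eq_length, p.2]
    ⟨fun i => p.1.toList[i.val],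
      isBallot_of_ofFn_eq p.1 (List.ext_getElem (by simp [hlen]) (by simp))⟩
  left_inv w := by ext; simp
  right_inv p := by
    ext1; ext1
    exact List.ext_getElem (by simp [← p.1.two_mul_semilength_eq_length, p.2]) (by simp)

section Steps

variable {σ : Perm (Fin m)}

def dyckSteps (σ : Perm (Fin m)) (x : Fin m) : DyckStep := if x < σ x then U else D

lemma dyckSteps_eq_U {x : Fin m} : dyckSteps σ x = U ↔ x < σ x := by
  unfold dyckSteps; split_ifs with h <;> simp [h]

lemma _root_.IsPerfMatching.apply_apply (hσ : IsPerfMatching σ) (x : Fin m) : σ (σ x) = x :=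
  Perm.ext_iff.1 hσ.1 x

lemma _root_.IsPerfMatching.dyckSteps_eq_D (hσ : IsPerfMatching σ) {x : Fin m} :
    dyckSteps σ x = D ↔ σ x < x := by
  unfold dyckSteps
  split_ifs with h
  · simpa using h.le
  · simpa using lt_of_le_of_ne (not_lt.1 h) (hσ.2 x)

lemma _root_.IsPerfMatching.toInt_dyckSteps_apply (hσ : IsPerfMatching σ) (x : Fin m) :
    (dyckSteps σ (σ x)).toInt = -(dyckSteps σ x).toInt := by
  rcases lt_or_gt_of_ne (hσ.2 x) with h | h
  · rw [dyckSteps_eq_U.2 (by rwa [hσ.apply_apply]), hσ.dyckSteps_eq_D.2 h]; rfl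
  · rw [hσ.dyckSteps_eq_D.2 (by rwa [hσ.apply_apply]), dyckSteps_eq_U.2 h]; rfl

lemma _root_.IsPerfMatching.sum_toInt_dyckSteps_eq_zero (hσ : IsPerfMatching σ)
    {s : Finset (Fin m)} (hs : ∀ x ∈ s, σ x ∈ s) : ∑ x ∈ s, (dyckSteps σ x).toInt = 0 :=
  sum_involution (fun x _ => σ x) (fun x _ => by rw [hσ.toInt_dyckSteps_apply, add_neg_cancel])
    (fun x _ _ => hσ.2 x) hs (fun x _ => hσ.apply_apply x)

lemma _root_.IsPerfMatching.sum_toInt_dyckSteps_nonneg (hσ : IsPerfMatching σ)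
    {s : Finset (Fin m)} (hs : ∀ x ∈ s, σ x < x → σ x ∈ s) :
    0 ≤ ∑ x ∈ s, (dyckSteps σ x).toInt := by
  rw [sum_toInt_eq_card_sub_card, sub_nonneg, Nat.cast_le]
  refine card_le_card_of_injOn σ (fun x hx => ?_) σ.injective.injOn
  simp only [coe_filter, Set.mem_ofPred_eq] at hx ⊢
  have hx' := hσ.dyckSteps_eq_D.1 hx.2
  exact ⟨hs x hx.1 hx', dyckSteps_eq_U.2 (by rwa [hσ.apply_apply])⟩

lemma _root_.IsPerfMatching.isBallot_dyckSteps (hσ : IsPerfMatching σ) :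
    IsBallot (dyckSteps σ) where
  height_nonneg i := hσ.sum_toInt_dyckSteps_nonneg fun x hx h => by
    simp only [mem_filter, mem_univ, true_and] at hx ⊢
    omega
  height_eq_zero := hσ.sum_toInt_dyckSteps_eq_zero fun x _ => by simp

end Steps

section OfEquiv

variable {w : Fin m → DyckStep} (e : {x // w x = U} ≃ {x // w x = D})

def ofEquiv : Perm (Fin m) :=
  Function.Involutive.toPerm
    (fun x => if h : w x = U then e ⟨x, h⟩ else e.symm ⟨x, (w x).dichotomy.resolve_left h⟩)
    (fun x => by
      have hD (y) : w (e y : Fin m) = D := (e y).2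
      have hU (y) : w (e.symm y : Fin m) = U := (e.symm y).2
      by_cases h : w x = U <;> simp [h, hD, hU])

lemma ofEquiv_apply_of_eq_U {x : Fin m} (h : w x = U) : ofEquiv e x = e ⟨x, h⟩ := dif_pos h

lemma ofEquiv_apply_of_eq_D {x : Fin m} (h : w x = D) : ofEquiv e x = e.symm ⟨x, h⟩ :=
  dif_neg (by simp [h])

lemma isPerfMatching_ofEquiv : IsPerfMatching (ofEquiv e) := by
  refine ⟨Equiv.ext (Function.Involutive.toPerm_involutive _), fun x hx => ?_⟩
  rcases (w x).dichotomy with h | h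
  · have := (e ⟨x, h⟩).2
    rw [← ofEquiv_apply_of_eq_U e h, hx, h] at this
    cases this
  · have := (e.symm ⟨x, h⟩).2
    rw [← ofEquiv_apply_of_eq_D e h, hx, h] at this
    cases this

lemma dyckSteps_ofEquiv (he : ∀ a, a.1 < (e a).1) : dyckSteps (ofEquiv e) = w := by
  funext x
  rcases (w x).dichotomy with h | h
  · rw [h, dyckSteps_eq_U, ofEquiv_apply_of_eq_U e h]
    exact he ⟨x, h⟩
  · rw [h, (isPerfMatching_ofEquiv e).dyckSteps_eq_D, ofEquiv_apply_of_eq_D e h]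
    simpa using he (e.symm ⟨x, h⟩)

lemma eq_ofEquiv {σ : Perm (Fin m)} (hσ : IsPerfMatching σ)
    (h : ∀ a : {x // w x = U}, σ a = e a) : σ = ofEquiv e := by
  refine Equiv.ext fun x => ?_
  rcases (w x).dichotomy with hx | hx
  · rw [ofEquiv_apply_of_eq_U e hx, ← h]
  · have hσx : σ (e.symm ⟨x, hx⟩) = x := by rw [h, Equiv.apply_symm_apply]
    rw [ofEquiv_apply_of_eq_D e hx]
    conv_lhs => rw [← hσx]
    exact hσ.apply_apply _

end OfEquiv

section Nonnesting

variable {w : Fin m → DyckStep}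

lemma IsBallot.card_U_eq_card_D (hw : IsBallot w) :
    Fintype.card {x // w x = U} = Fintype.card {x // w x = D} := by
  have := hw.height_eq_zero
  rw [height, filter_true_of_mem (fun x _ => x.2), sum_toInt_eq_card_sub_card] at this
  simp only [Fintype.card_subtype]
  omega

lemma IsBallot.card_D_le_card_U (hw : IsBallot w) (c : Fin m) :
    #{x | x ≤ c ∧ w x = D} ≤ #{x | x ≤ c ∧ w x = U} := by
  have := hw.height_nonneg (c + 1)
  rw [height, sum_toInt_eq_card_sub_card, filter_filter, filter_filter] at this
  simp only [Nat.lt_succ_iff, Fin.val_fin_le] at this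
  omega

def IsBallot.orderIso (hw : IsBallot w) : {x // w x = U} ≃o {x // w x = D} :=
  (Fintype.orderIsoFinOfCardEq _ rfl).symm.trans
    (Fintype.orderIsoFinOfCardEq _ hw.card_U_eq_card_D.symm)

def IsBallot.nonnestingMatching (hw : IsBallot w) : Perm (Fin m) :=
  ofEquiv hw.orderIso.toEquiv

lemma IsBallot.lt_orderIso (hw : IsBallot w) (a : {x // w x = U}) : a.1 < (hw.orderIso a).1 := by
  -- If the `k`-th down step `c` came before the `k`-th up step `a`, the prefix ending at `c`
  -- would contain more down steps than up steps.
  set c := hw.orderIso a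
  have hac : a.1 ≠ c.1 := fun h => by simpa [h, c.2] using a.2
  by_contra! hca
  replace hca := lt_of_le_of_ne hca hac.symm
  have h1 : #{x | x ≤ a.1 ∧ w x = U} ≤ #{x | x ≤ c.1 ∧ w x = D} := by
    refine card_le_card_of_injOn hw.nonnestingMatching (fun x hx => ?_)
      hw.nonnestingMatching.injective.injOn
    simp only [coe_filter, mem_univ, true_and, Set.mem_ofPred_eq] at hx ⊢
    rw [IsBallot.nonnestingMatching, ofEquiv_apply_of_eq_U _ hx.2]
    exact ⟨hw.orderIso.monotone (Subtype.mk_le_mk.2 hx.1), (hw.orderIso _).2⟩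
  have h2 : #{x | x ≤ c.1 ∧ w x = U} < #{x | x ≤ a.1 ∧ w x = U} := by
    refine card_lt_card ((ssubset_iff_of_subset fun x hx => ?_).2 ⟨a, ?_⟩)
    · simp only [mem_filter, mem_univ, true_and] at hx ⊢
      exact ⟨hx.1.trans hca.le, hx.2⟩
    · simp [a.2, hca]
  have := hw.card_D_le_card_U c
  omega

lemma IsBallot.isPerfMatching_nonnestingMatching (hw : IsBallot w) :
    IsPerfMatching hw.nonnestingMatching :=
  isPerfMatching_ofEquiv _

lemma IsBallot.dyckSteps_nonnestingMatching (hw : IsBallot w) :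
    dyckSteps hw.nonnestingMatching = w :=
  dyckSteps_ofEquiv _ hw.lt_orderIso

lemma IsBallot.not_hasNesting_nonnestingMatching (hw : IsBallot w) :
    ¬ HasNesting hw.nonnestingMatching := by
  rintro ⟨a, b, hab, hb, hba⟩
  have hwb : w b = U := by rw [← hw.dyckSteps_nonnestingMatching, dyckSteps_eq_U]; exact hb
  rcases (w a).dichotomy with hwa | hwa
  · have : hw.nonnestingMatching a < hw.nonnestingMatching b := by
      simp only [IsBallot.nonnestingMatching, ofEquiv_apply_of_eq_U _ hwa,
        ofEquiv_apply_of_eq_U _ hwb]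
      exact hw.orderIso.strictMono (Subtype.mk_lt_mk.2 hab)
    exact this.not_gt hba
  · rw [← hw.dyckSteps_nonnestingMatching,
      hw.isPerfMatching_nonnestingMatching.dyckSteps_eq_D] at hwa
    exact (hwa.trans (hab.trans hb)).not_gt hba

lemma _root_.IsPerfMatching.eq_nonnestingMatching {σ : Perm (Fin m)} (hσ : IsPerfMatching σ)
    (hnn : ¬ HasNesting σ) : σ = hσ.isBallot_dyckSteps.nonnestingMatching := by
  -- Without nestings `σ` is increasing from up steps to down steps, and an order isomorphism
  -- between finite chains is unique.
  let r : {x // dyckSteps σ x = U} ≃ {x // dyckSteps σ x = D} :=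
    σ.subtypeEquiv fun a => by
      rw [dyckSteps_eq_U, hσ.dyckSteps_eq_D, hσ.apply_apply]
  have hr : StrictMono r := by
    intro a b hab
    by_contra! h
    refine hnn ⟨a, b, hab, dyckSteps_eq_U.1 b.2, lt_of_le_of_ne h fun h' => hab.ne ?_⟩
    exact Subtype.ext (σ.injective h'.symm)
  have := Subsingleton.elim (hr.orderIsoOfSurjective r r.surjective) hσ.isBallot_dyckSteps.orderIso
  exact eq_ofEquiv _ hσ fun a => congrArg (fun f => (f a).1) this

end Nonnesting

def nonnestingEquivBallot (m : ℕ) :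
    {σ : Perm (Fin m) // IsPerfMatching σ ∧ ¬ HasNesting σ} ≃
      {w : Fin m → DyckStep // IsBallot w} where
  toFun σ := ⟨dyckSteps σ, σ.2.1.isBallot_dyckSteps⟩
  invFun w := ⟨w.2.nonnestingMatching, w.2.isPerfMatching_nonnestingMatching,
    w.2.not_hasNesting_nonnestingMatching⟩
  left_inv σ := Subtype.ext (σ.2.1.eq_nonnestingMatching σ.2.2).symm
  right_inv w := Subtype.ext w.2.dyckSteps_nonnestingMatching

section Noncrossing

variable {w : Fin m → DyckStep} {a b c c' : Fin m}

/-- Read as a bracket word, `w` closes at `c` the bracket it opens at `a`. -/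
structure IsReturn (w : Fin m → DyckStep) (a c : Fin m) : Prop where
  lt : a < c
  height_succ_eq : height w (c + 1) = height w a
  height_lt (d : ℕ) : a < d → d ≤ c → height w a < height w d

lemma IsReturn.le (h : IsReturn w a c) (h' : IsReturn w a c') : c ≤ c' := by
  by_contra! hc'c
  have := h.height_lt (c' + 1) (by have := h'.lt; omega) hc'c
  rw [h'.height_succ_eq] at this
  exact this.false

lemma IsReturn.unique (h : IsReturn w a c) (h' : IsReturn w a c') : c = c' :=
  le_antisymm (h.le h') (h'.le h)

lemma IsReturn.lt_of_lt_of_lt (h : IsReturn w a c) (h' : IsReturn w b c') (hab : a < b)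
    (hbc : b < c) : c' < c := by
  have hb := h.height_lt b hab hbc.le
  by_contra! hcc'
  rcases hcc'.eq_or_lt with rfl | hcc'
  · rw [← h'.height_succ_eq, h.height_succ_eq] at hb
    exact hb.false
  · have := h'.height_lt (c + 1) (by omega) hcc'
    rw [h.height_succ_eq] at this
    exact this.asymm hb

lemma IsReturn.eq_D (h : IsReturn w a c) : w c = D := by
  have hc := h.height_lt c h.lt le_rfl
  rw [← h.height_succ_eq, height_succ w c] at hc
  rcases (w c).dichotomy with hwc | hwc
  · rw [hwc] at hc; simp [toInt] at hc
  · exact hwc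

lemma IsBallot.exists_isReturn (hw : IsBallot w) (ha : w a = U) : ∃ c, IsReturn w a c := by
  have hP : ∃ d : ℕ, a < d ∧ height w d ≤ height w a :=
    ⟨m, a.2, hw.height_eq_zero ▸ hw.height_nonneg a⟩
  -- The first `d > a` at which the path is back at level `height w a` or below; as steps are
  -- `±1`, it is exactly at that level, and `d - 1` closes the bracket opened at `a`.
  set d := Nat.find hP
  obtain ⟨had, hda⟩ : a < d ∧ height w d ≤ height w a := Nat.find_spec hP
  have hmin (e : ℕ) (hae : a < e) (hed : e < d) : height w a < height w e :=
    not_le.1 fun h => Nat.find_min hP hed ⟨hae, h⟩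
  have hdm : d ≤ m := Nat.find_min' hP ⟨a.2, hw.height_eq_zero ▸ hw.height_nonneg a⟩
  have ha1 : height w (a + 1) = height w a + 1 := by rw [height_succ, ha]; rfl
  have hd : (a : ℕ) + 1 ≠ d := fun h => by rw [← h, ha1] at hda; omega
  let c : Fin m := ⟨d - 1, by omega⟩
  have hc : (c : ℕ) + 1 = d := by simp only [c]; omega
  have hac : a < c := Fin.lt_def.2 (by simp only [c]; omega)
  refine ⟨c, hac, ?_, fun e hae hec => hmin e hae (by omega)⟩
  have := hmin c hac (by omega)
  have := neg_one_le_toInt (w c)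
  rw [← hc, height_succ] at hda
  rw [height_succ]
  omega

noncomputable def IsBallot.firstReturn (hw : IsBallot w) (a : {x // w x = U}) : Fin m :=
  (hw.exists_isReturn a.2).choose

lemma IsBallot.isReturn_firstReturn (hw : IsBallot w) (a : {x // w x = U}) :
    IsReturn w a (hw.firstReturn a) :=
  (hw.exists_isReturn a.2).choose_spec

lemma IsBallot.firstReturn_injective (hw : IsBallot w) : Function.Injective hw.firstReturn :=
  .of_lt_imp_ne fun a b hab h => by
    have hb := hw.isReturn_firstReturn b
    rw [← h] at hb
    exact ((hw.isReturn_firstReturn a).lt_of_lt_of_lt hb hab hb.lt).false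

noncomputable def IsBallot.returnEquiv (hw : IsBallot w) : {x // w x = U} ≃ {x // w x = D} :=
  Equiv.ofBijective (fun a => ⟨hw.firstReturn a, (hw.isReturn_firstReturn a).eq_D⟩) <|
    (Fintype.bijective_iff_injective_and_card _).2
      ⟨fun _ _ h => hw.firstReturn_injective (congrArg Subtype.val h), hw.card_U_eq_card_D⟩

noncomputable def IsBallot.noncrossingMatching (hw : IsBallot w) : Perm (Fin m) :=
  ofEquiv hw.returnEquiv

lemma IsBallot.isPerfMatching_noncrossingMatching (hw : IsBallot w) :
    IsPerfMatching hw.noncrossingMatching :=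
  isPerfMatching_ofEquiv _

lemma IsBallot.noncrossingMatching_apply (hw : IsBallot w) (a : {x // w x = U}) :
    hw.noncrossingMatching a = hw.firstReturn a :=
  ofEquiv_apply_of_eq_U _ a.2

lemma IsBallot.dyckSteps_noncrossingMatching (hw : IsBallot w) :
    dyckSteps hw.noncrossingMatching = w :=
  dyckSteps_ofEquiv _ fun a => (hw.isReturn_firstReturn a).lt

lemma IsBallot.not_hasCrossing_noncrossingMatching (hw : IsBallot w) :
    ¬ HasCrossing hw.noncrossingMatching := by
  rintro ⟨a, b, hab, hba, hcr⟩
  set σ := hw.noncrossingMatching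
  have hopen {x : Fin m} (hx : ¬ σ x < x) : IsReturn w x (σ x) := by
    have hwx : w x = U := by
      rw [← hw.dyckSteps_noncrossingMatching, dyckSteps_eq_U]
      exact (lt_or_gt_of_ne (hw.isPerfMatching_noncrossingMatching.2 x)).resolve_left hx
    rw [hw.noncrossingMatching_apply ⟨x, hwx⟩]
    exact hw.isReturn_firstReturn ⟨x, hwx⟩
  have ha := hopen fun h => lt_irrefl _ (h.trans (hab.trans hba))
  have hb := hopen fun h => lt_irrefl _ (h.trans (hba.trans hcr))
  exact (ha.lt_of_lt_of_lt hb hab hba).asymm hcr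

lemma _root_.IsPerfMatching.lt_apply_of_not_hasCrossing {σ : Perm (Fin m)}
    (hσ : IsPerfMatching σ) (hnc : ¬ HasCrossing σ) {a x : Fin m} (hax : a < x)
    (hxa : x < σ a) :
    a < σ x ∧ σ x < σ a := by
  constructor
  · by_contra! h
    have hne : σ x ≠ a := fun h' => hxa.ne (by rw [← h', hσ.apply_apply])
    rw [← hσ.apply_apply x] at hax hxa
    exact hnc ⟨σ x, a, lt_of_le_of_ne h hne, hax, hxa⟩
  · by_contra! h
    exact hnc ⟨a, x, hax, hxa, lt_of_le_of_ne h fun h' => hax.ne (σ.injective h')⟩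

lemma _root_.IsPerfMatching.isReturn_of_not_hasCrossing {σ : Perm (Fin m)}
    (hσ : IsPerfMatching σ) (hnc : ¬ HasCrossing σ) {a : Fin m} (ha : a < σ a) :
    IsReturn (dyckSteps σ) a (σ a) := by
  -- Without crossings `σ` maps `[a, σ a]` into itself, so that segment is balanced, and every
  -- down step in `(a, d)` is matched with an up step in `(a, d)`.
  have hinner {x : Fin m} (hax : a < x) (hxa : x < σ a) :=
    hσ.lt_apply_of_not_hasCrossing hnc hax hxa
  refine ⟨ha, ?_, fun d had hdσ => ?_⟩
  · have := height_sub_height (dyckSteps σ) (show (a : ℕ) ≤ σ a + 1 by omega)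
    rwa [hσ.sum_toInt_dyckSteps_eq_zero fun x hx => ?_, sub_eq_zero] at this
    simp only [mem_filter, mem_univ, true_and] at hx ⊢
    rcases (show x = a ∨ x = σ a ∨ (a < x ∧ x < σ a) by
        simp only [Fin.ext_iff, Fin.lt_def]; omega)
      with rfl | rfl | ⟨h1, h2⟩
    · omega
    · rw [hσ.apply_apply]; omega
    · have := hinner h1 h2; simp only [Fin.lt_def] at this; omega
  · have ha1 := height_succ (dyckSteps σ) a
    rw [dyckSteps_eq_U.2 ha] at ha1
    have := height_sub_height (dyckSteps σ) (show (a : ℕ) + 1 ≤ d by omega)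
    have : 0 ≤ ∑ x with (a : ℕ) + 1 ≤ (x : Fin m) ∧ x.val < d,
        (dyckSteps σ x).toInt := by
      refine hσ.sum_toInt_dyckSteps_nonneg fun x hx hσx => ?_
      simp only [mem_filter, mem_univ, true_and] at hx ⊢
      have := hinner (x := x) (Fin.lt_def.2 (by omega)) (Fin.lt_def.2 (by omega))
      simp only [Fin.lt_def] at this hσx
      omega
    simp only [toInt] at ha1
    omega

lemma _root_.IsPerfMatching.eq_noncrossingMatching {σ : Perm (Fin m)}
    (hσ : IsPerfMatching σ) (hnc : ¬ HasCrossing σ) :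
    σ = hσ.isBallot_dyckSteps.noncrossingMatching :=
  eq_ofEquiv _ hσ fun a => (hσ.isReturn_of_not_hasCrossing hnc (dyckSteps_eq_U.1 a.2)).unique
    (hσ.isBallot_dyckSteps.isReturn_firstReturn a)

end Noncrossing

noncomputable def noncrossingEquivBallot (m : ℕ) :
    {σ : Perm (Fin m) // IsPerfMatching σ ∧ ¬ HasCrossing σ} ≃
      {w : Fin m → DyckStep // IsBallot w} where
  toFun σ := ⟨dyckSteps σ, σ.2.1.isBallot_dyckSteps⟩
  invFun w := ⟨w.2.noncrossingMatching, w.2.isPerfMatching_noncrossingMatching,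
    w.2.not_hasCrossing_noncrossingMatching⟩
  left_inv σ := Subtype.ext (σ.2.1.eq_noncrossingMatching σ.2.2).symm
  right_inv w := Subtype.ext w.2.dyckSteps_noncrossingMatching

end PerfMatching

/-- The number of nonnesting matchings on `[2n]` equals the number of noncrossing
matchings on `[2n]`, and both equal the Catalan number `C_n`. -/
theorem card_nonnesting_eq_card_noncrossing_eq_catalan (n : ℕ) :
    Nat.card {σ : Equiv.Perm (Fin (2 * n)) // IsPerfMatching σ ∧ ¬ HasNesting σ} =
      Nat.card {σ : Equiv.Perm (Fin (2 * n)) // IsPerfMatching σ ∧ ¬ HasCrossing σ} ∧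
    Nat.card {σ : Equiv.Perm (Fin (2 * n)) // IsPerfMatching σ ∧ ¬ HasNesting σ} =
      catalan n := by
  have hnn := Nat.card_congr (PerfMatching.nonnestingEquivBallot (2 * n))
  have hnc := Nat.card_congr (PerfMatching.noncrossingEquivBallot (2 * n))
  have hballot :
      Nat.card {w : Fin (2 * n) → DyckStep // PerfMatching.IsBallot w} = catalan n := by
    rw [Nat.card_congr (PerfMatching.ballotEquivDyckWord n), Nat.card_eq_fintype_card,
      DyckWord.card_dyckWord_semilength_eq_catalan]
  exact ⟨hnn.trans hnc.symm, hnn.trans hballot⟩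
end

section
/- For n > 1, there is no web permutation σ of [n] with σ(1) = n such that the noncrossing matching M(σ) associated to σ equals M_0 = {{1,2},…,{2n−1,2n}}; indeed, for any web permutation σ with σ(1) = n one has σ(n) = 1, and consequently {1, 2n} ∈ M(σ). -/
/-- One step of tracing a strand through the fully-smoothed grid configuration
`G(σ, Cr(σ))` of a permutation of `[n]` (1-indexed; `f = σ`, `g = σ⁻¹`).
A state `(i, j, d)` means the strand is entering cell `(i, j)` moving in direction `d`
(`0` = rightwards, `1` = upwards, `2` = downwards, `3` = leftwards); cell `(i,j)` carries
a marking if `σ i = j`, and an elbow (a smoothed crossing) if `σ i < j` and `i < σ⁻¹ j`.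
The result is either the next state or the boundary label in `[2n]` where the strand
exits (left boundary intervals are labelled `1, …, n` bottom-to-top, top boundary
intervals `n+1, …, 2n` left-to-right). -/
def gridStep (n : ℕ) (f g : ℕ → ℕ) : ℕ × ℕ × Fin 4 → (ℕ × ℕ × Fin 4) ⊕ ℕ :=
  fun s =>
    let i := s.1
    let j := s.2.1
    let d := s.2.2
    if d = 0 then
      if f i = j then (if j = n then Sum.inr (n + i) else Sum.inl (i, j + 1, 1))
      else if f i < j ∧ i < g j then Sum.inl (i, j - 1, 2)
      else Sum.inl (i + 1, j, 0)
    else if d = 1 then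
      if f i < j ∧ i < g j then (if i = 1 then Sum.inr j else Sum.inl (i - 1, j, 3))
      else (if j = n then Sum.inr (n + i) else Sum.inl (i, j + 1, 1))
    else if d = 2 then
      if f i = j then (if i = 1 then Sum.inr j else Sum.inl (i - 1, j, 3))
      else if i < g j then Sum.inl (i + 1, j, 0)
      else Sum.inl (i, j - 1, 2)
    else
      if f i < j then (if j = n then Sum.inr (n + i) else Sum.inl (i, j + 1, 1))
      else (if i = 1 then Sum.inr j else Sum.inl (i - 1, j, 3))

/-- Iterate `gridStep` (with fuel) until the strand exits at a boundary label. -/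
def traceAux (n : ℕ) (f g : ℕ → ℕ) : ℕ → ℕ × ℕ × Fin 4 → ℕ
  | 0, _ => 0
  | fuel + 1, s =>
    match gridStep n f g s with
    | Sum.inr b => b
    | Sum.inl s' => traceAux n f g fuel s'

/-- The endpoint, in the noncrossing matching `M(σ)` read off from the fully smoothed
grid configuration `G(σ, Cr(σ))`, of the arc starting at boundary label `a ∈ [2n]`. -/
noncomputable def matchEndpoint {n : ℕ} (σ : Equiv.Perm (Fin n)) (a : ℕ) : ℕ :=
  let f : ℕ → ℕ := fun i => if h : i - 1 < n then ((σ ⟨i - 1, h⟩ : ℕ) + 1) else 0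
  let g : ℕ → ℕ := fun j => if h : j - 1 < n then ((σ⁻¹ ⟨j - 1, h⟩ : ℕ) + 1) else 0
  if a ≤ n then traceAux n f g (4 * n * n + 4) (1, a, 0)
  else traceAux n f g (4 * n * n + 4) (a - n, n, 2)


/-! ### Auxiliary lemmas -/

lemma le_listMax_of_mem {x : ℕ} {l : List ℕ} (h : x ∈ l) : x ≤ listMax l := by
  induction l with
  | nil => simp at h
  | cons a t ih =>
    rcases List.mem_cons.1 h with rfl | h
    · simp [listMax]
    · simp only [listMax, List.foldr_cons]
      exact le_max_of_le_right (ih h)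

lemma listMax_le {b : ℕ} {l : List ℕ} (h : ∀ x ∈ l, x ≤ b) : listMax l ≤ b := by
  induction l with
  | nil => simp [listMax]
  | cons a t ih =>
    simp only [listMax, List.foldr_cons]
    exact max_le (h a (by simp)) (ih fun x hx => h x (by simp [hx]))

lemma andre_head_max {t : List ℕ} (h : IsAndre t) :
    ∀ b t', t = b :: t' → (∀ x ∈ t, x ≤ b) → t' = [] := by
  cases h with
  | nil => intro b t' he _; simp at he
  | single a => intro b t' he _; injection he with h1 h2; exact h2.symm
  | node l r m hl hr hmin hmax =>
    intro b t' he hle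
    cases l with
    | nil =>
      simp only [List.nil_append] at he hmax hle hmin ⊢
      injection he with hbm ht'
      cases r with
      | nil => exact ht'.symm
      | cons y r' =>
        have h1 : m < y := hmin y (by simp)
        have h2 : y ≤ b := hle y (by simp)
        omega
    | cons c l' =>
      exfalso
      simp only [List.cons_append] at he hle
      injection he with hbc ht'
      have h1 : c ≤ listMax (c :: l') := le_listMax_of_mem (by simp)
      have h2 : listMax r ≤ b := listMax_le fun x hx => hle x (by simp [hx])
      omega

lemma trace_up (n : ℕ) (f g : ℕ → ℕ) (Hg : ∀ j, g j ≤ n) :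
    ∀ fuel j, 2 ≤ j → j ≤ n → n - j < fuel → traceAux n f g fuel (n, j, 1) = 2 * n := by
  intro fuel
  induction fuel with
  | zero => intro j _ _ h; omega
  | succ fuel ih =>
    intro j h2 hjn hfuel
    have hng : ¬ (f n < j ∧ n < g j) := by
      rintro ⟨-, h⟩; exact absurd (Hg j) (by omega)
    by_cases hj : j = n
    · subst hj
      simp only [traceAux, gridStep, hng, if_true, if_false, ite_true, ite_false]
      norm_num
      omega
    · have hstep : traceAux n f g (fuel+1) (n, j, 1) = traceAux n f g fuel (n, j+1, 1) := by
        simp [traceAux, gridStep, hng, hj]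
      rw [hstep]
      exact ih (j+1) (by omega) (by omega) (by omega)

lemma trace_right (n : ℕ) (f g : ℕ → ℕ) (hn : 1 < n) (Hfn : f n = 1)
    (Hfi : ∀ i, 1 ≤ i → i < n → 2 ≤ f i) (Hg : ∀ j, g j ≤ n) :
    ∀ fuel i, 1 ≤ i → i ≤ n → 2 * n - i < fuel → traceAux n f g fuel (i, 1, 0) = 2 * n := by
  intro fuel
  induction fuel with
  | zero => intro i _ _ h; omega
  | succ fuel ih =>
    intro i h1 hin hfuel
    by_cases hi : i = n
    · subst hi
      have hstep : traceAux i f g (fuel+1) (i, 1, 0) = traceAux i f g fuel (i, 2, 1) := by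
        simp only [traceAux, gridStep, Hfn]
        norm_num
        rw [if_neg (show ¬ (1 : ℕ) = i by omega)]
      rw [hstep]
      exact trace_up i f g Hg fuel 2 (by omega) (by omega) (by omega)
    · have hf := Hfi i h1 (by omega)
      have hstep : traceAux n f g (fuel+1) (i, 1, 0) = traceAux n f g fuel (i+1, 1, 0) := by
        simp only [traceAux, gridStep]
        norm_num
        rw [if_neg (show ¬ f i = 1 by omega), if_neg (show ¬ (f i = 0 ∧ i < g 1) by omega)]
      rw [hstep]
      exact ih (i+1) (by omega) (by omega) (by omega)

/-- For `n > 1` there is no web permutation `σ` of `[n]` with `σ(1) = n` whose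
associated noncrossing matching `M(σ)` is `M₀ = {{1,2},…,{2n−1,2n}}`: indeed any such
web permutation satisfies `σ(n) = 1`, and consequently `{1, 2n} ∈ M(σ)`. -/
theorem webPerm_first_eq_n (n : ℕ) (hn : 1 < n) (σ : Equiv.Perm (Fin n))
    (hweb : IsWebPerm σ) (h1 : (σ ⟨0, by omega⟩ : ℕ) = n - 1) :
    (σ ⟨n - 1, by omega⟩ : ℕ) = 0 ∧
    matchEndpoint σ 1 = 2 * n ∧
    ¬ (∀ a : ℕ, 1 ≤ a → a ≤ 2 * n →
        matchEndpoint σ a = if a % 2 = 1 then a + 1 else a - 1) := by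
  classical
  -- ### Part (a): σ(n-1) = 0
  set x0 : Fin n := ⟨0, by omega⟩ with hx0
  have hmin : ∀ k : ℕ, x0 ≤ (σ ^ k) x0 := by
    intro k; rw [Fin.le_def]; exact Nat.zero_le _
  obtain ⟨a, t, hct, hat, hand⟩ := hweb x0 hmin
  have hper : Function.IsPeriodicPt ⇑σ (orderOf σ) x0 := by
    simp [Function.IsPeriodicPt, Function.IsFixedPt, Equiv.Perm.iterate_eq_pow,
      pow_orderOf_eq_one]
  have hTpos : 0 < Function.minimalPeriod ⇑σ x0 := hper.minimalPeriod_pos (orderOf_pos σ)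
  have hfix : ¬ Function.IsFixedPt ⇑σ x0 := by
    intro h
    have : (σ x0 : ℕ) = (x0 : ℕ) := congrArg Fin.val h
    rw [h1] at this
    simp [hx0] at this
    omega
  have hT1 : Function.minimalPeriod ⇑σ x0 ≠ 1 := by
    simp only [ne_eq, Function.minimalPeriod_eq_one_iff_isFixedPt]; exact hfix
  obtain ⟨T', hT'⟩ : ∃ T', Function.minimalPeriod ⇑σ x0 = T' + 2 :=
    ⟨Function.minimalPeriod ⇑σ x0 - 2, by omega⟩
  have hlist : permCycleList σ x0 =
      (((σ ^ 0) x0 : ℕ) + 1) :: ((((σ ^ 1) x0 : ℕ) + 1) ::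
        (List.range T').map (fun k => (((σ ^ (k + 2)) x0 : ℕ) + 1))) := by
    simp only [permCycleList]
    rw [hT', List.range_succ_eq_map, List.range_succ_eq_map]
    simp [List.map_map, Function.comp_def, Nat.succ_eq_add_one]
  have hbound : ∀ x ∈ t, x ≤ ((σ ^ 1) x0 : ℕ) + 1 := by
    have hσ1 : ((σ ^ 1) x0 : ℕ) = n - 1 := by
      rw [pow_one]; exact h1
    intro x hx
    have hx' : x ∈ permCycleList σ x0 := by
      rw [hct]; exact List.mem_cons_of_mem a hx
    simp only [permCycleList] at hx'
    obtain ⟨k, -, rfl⟩ := List.mem_map.1 hx'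
    have := ((σ ^ k) x0).isLt
    omega
  have hteq : t = (((σ ^ 1) x0 : ℕ) + 1) ::
      (List.range T').map (fun k => (((σ ^ (k + 2)) x0 : ℕ) + 1)) := by
    exact (List.cons_eq_cons.mp (hct.symm.trans hlist)).2
  have hrest : (List.range T').map (fun k => (((σ ^ (k + 2)) x0 : ℕ) + 1)) = [] := by
    exact andre_head_max hand _ _ hteq hbound
  have hT'0 : T' = 0 := by
    have := congrArg List.length hrest
    simpa using this
  have hT2 : Function.minimalPeriod ⇑σ x0 = 2 := by omega
  have hσ2 : σ (σ x0) = x0 := by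
    have := Function.iterate_minimalPeriod (f := ⇑σ) (x := x0)
    rw [hT2] at this
    exact this
  have hσx0 : σ x0 = ⟨n - 1, by omega⟩ := by
    apply Fin.ext; exact h1
  have hA : (σ ⟨n - 1, by omega⟩ : ℕ) = 0 := by
    rw [← hσx0, hσ2]
  have hB : matchEndpoint σ 1 = 2 * n := by
    simp only [matchEndpoint]
    rw [if_pos (by omega : 1 ≤ n)]
    have hnn : n ≤ n * n := Nat.le_mul_of_pos_left n (by omega)
    have h4 : 4 * n * n = 4 * (n * n) := by ring
    apply trace_right n _ _ hn ?_ ?_ ?_ (4 * n * n + 4) 1 le_rfl (by omega) (by omega)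
    · have hn1 : n - 1 < n := by omega
      rw [dif_pos hn1]
      omega
    · intro i hi1 hin
      have hlt : i - 1 < n := by omega
      rw [dif_pos hlt]
      rcases Nat.eq_zero_or_pos (σ ⟨i - 1, hlt⟩ : ℕ) with h0 | h0
      · exfalso
        have hn1 : n - 1 < n := by omega
        have heq : σ ⟨i - 1, hlt⟩ = σ ⟨n - 1, hn1⟩ := by
          apply Fin.ext
          rw [h0]
          exact hA.symm
        have hij := σ.injective heq
        rw [Fin.mk.injEq] at hij
        omega
      · omega
    · intro j
      by_cases hj : j - 1 < n
      · rw [dif_pos hj]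
        have := (σ⁻¹ ⟨j - 1, hj⟩).isLt
        omega
      · rw [dif_neg hj]
        omega
  refine ⟨hA, hB, ?_⟩
  intro hall
  have hc := hall 1 le_rfl (by omega)
  norm_num at hc
  omega
end
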